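/- arXiv:1810.04536 — 3 statements merged into one kernel-verified Lean document; each statement's English description precedes it below -/
import Mathlib

section
/- Let C be an [n,k]-code over F_2 with generating matrix in standard form G = (I_k | M), and let m_i ∈ F_2^n be the vector (0,...,0, g_{i,k+1},..., g_{i,n}) for 1 ≤ i ≤ k. Then with respect to the lexicographic order with X_1 > X_2 > ... > X_n, the set G = {X_i − X^{m_i} : 1 ≤ i ≤ k} ∪ {X_i^2 − 1 : k+1 ≤ i ≤ n} is the reduced Groebner basis of the code ideal I_C = ⟨X^c − X^{c'} : c − c' ∈ C⟩ + ⟨X_i^2 − 1 : 1 ≤ i ≤ n⟩ in K[X_1,...,X_n], where K is a field. -/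
open MvPolynomial
open scoped MonomialOrder

/-- The leading (multidegree) exponent of a polynomial with respect to a monomial order. -/
noncomputable def leadExp {σ K : Type*} [Field K] (m : MonomialOrder σ)
    (f : MvPolynomial σ K) : σ →₀ ℕ :=
  m.toSyn.symm (f.support.sup fun d => m.toSyn d)

/-- The leading term of a polynomial with respect to a monomial order. -/
noncomputable def leadTerm {σ K : Type*} [Field K] (m : MonomialOrder σ)
    (f : MvPolynomial σ K) : MvPolynomial σ K :=
  monomial (leadExp m f) (f.coeff (leadExp m f))

/-- `G` is a Groebner basis of the ideal `I` for the monomial order `m`. -/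
def IsGroebnerBasis {σ K : Type*} [Field K] (m : MonomialOrder σ)
    (I : Ideal (MvPolynomial σ K)) (G : Set (MvPolynomial σ K)) : Prop :=
  G.Finite ∧ G ⊆ (I : Set (MvPolynomial σ K)) ∧
    Ideal.span (leadTerm m '' G) = Ideal.span (leadTerm m '' {f | f ∈ I ∧ f ≠ 0})

/-- A reduced Groebner basis: all elements monic, and no monomial of an element lies in
the ideal generated by the leading terms of the other elements. -/
def IsReducedGB {σ K : Type*} [Field K] (m : MonomialOrder σ)
    (G : Set (MvPolynomial σ K)) : Prop :=
  ∀ p ∈ G, p.coeff (leadExp m p) = 1 ∧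
    ∀ c ∈ p.support, (monomial c (1 : K)) ∉ Ideal.span (leadTerm m '' (G \ {p}))

/-- `r` is a remainder of `f` on division by `G` (relative to the ideal `I`):
`f - r ∈ I` and no monomial of `r` is divisible by the leading monomial
of any nonzero element of `G`. -/
def IsRemainder {σ K : Type*} [Field K] (m : MonomialOrder σ)
    (I : Ideal (MvPolynomial σ K)) (G : Set (MvPolynomial σ K))
    (f r : MvPolynomial σ K) : Prop :=
  f - r ∈ I ∧ ∀ c ∈ r.support, ∀ g ∈ G, g ≠ 0 → ¬ leadExp m g ≤ c

/-- The exponent vector in `ℕ^n` associated with a binary word. -/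
noncomputable def expOf {n : ℕ} (c : Fin n → ZMod 2) : Fin n →₀ ℕ :=
  Finsupp.equivFunOnFinite.symm fun i => (c i).val

/-- The monomial `X^c` associated with a binary word `c`. -/
noncomputable def Xw (K : Type*) [Field K] {n : ℕ} (c : Fin n → ZMod 2) :
    MvPolynomial (Fin n) K :=
  monomial (expOf c) 1

/-- The code ideal `I_C = ⟨X^c − X^{c'} : c − c' ∈ C⟩ + ⟨X_i^2 − 1 : 1 ≤ i ≤ n⟩`. -/
noncomputable def codeIdeal (K : Type*) [Field K] {n : ℕ}
    (C : Submodule (ZMod 2) (Fin n → ZMod 2)) : Ideal (MvPolynomial (Fin n) K) :=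
  Ideal.span ({f | ∃ c c' : Fin n → ZMod 2, c - c' ∈ C ∧ f = Xw K c - Xw K c'} ∪
    {f | ∃ i : Fin n, f = X i ^ 2 - 1})

/-- `g` is a generating matrix in standard form `(I_k | M)` for the code `C`:
its rows span `C` and its first `k` columns form the identity matrix. -/
def IsStandardGenMatrix {n k : ℕ} (hk : k ≤ n) (C : Submodule (ZMod 2) (Fin n → ZMod 2))
    (g : Fin k → Fin n → ZMod 2) : Prop :=
  C = Submodule.span (ZMod 2) (Set.range g) ∧
    ∀ i j : Fin k, g i (Fin.castLE hk j) = if i = j then 1 else 0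

/-- The word `m_i = (0,…,0, g_{i,k+1},…,g_{i,n})` built from the `i`-th row of `g`. -/
def mrow {n k : ℕ} (g : Fin k → Fin n → ZMod 2) (i : Fin k) : Fin n → ZMod 2 :=
  fun j => if (j : ℕ) < k then 0 else g i j

/-- The set `{X_i − X^{m_i} : 1 ≤ i ≤ k} ∪ {X_j^2 − 1 : k+1 ≤ j ≤ n}`. -/
noncomputable def gbSet (K : Type*) [Field K] {n k : ℕ} (hk : k ≤ n)
    (g : Fin k → Fin n → ZMod 2) : Set (MvPolynomial (Fin n) K) :=
  (Set.range fun i : Fin k => X (Fin.castLE hk i) - Xw K (mrow g i)) ∪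
    {f | ∃ j : Fin n, k ≤ (j : ℕ) ∧ f = X j ^ 2 - 1}



namespace CodeGBAux

variable {K : Type*} [Field K] {n k : ℕ}

/-- mod-2 reduction of an exponent vector, as an additive hom. -/
def bar (n : ℕ) : (Fin n →₀ ℕ) →+ (Fin n → ZMod 2) where
  toFun e j := ((e j : ℕ) : ZMod 2)
  map_zero' := by funext j; simp
  map_add' e e' := by funext j; simp

lemma bar_apply (e : Fin n →₀ ℕ) (j : Fin n) : bar n e j = ((e j : ℕ) : ZMod 2) := rfl

noncomputable def phi0 (C : Submodule (ZMod 2) (Fin n → ZMod 2)) :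
    (Fin n →₀ ℕ) →+ ((Fin n → ZMod 2) ⧸ C) :=
  (C.mkQ.toAddMonoidHom).comp (bar n)

lemma phi0_apply (C : Submodule (ZMod 2) (Fin n → ZMod 2)) (e : Fin n →₀ ℕ) :
    phi0 C e = Submodule.Quotient.mk (bar n e) := rfl

noncomputable def psi (K : Type*) [Field K] {n : ℕ}
    (C : Submodule (ZMod 2) (Fin n → ZMod 2)) :
    MvPolynomial (Fin n) K →+* AddMonoidAlgebra K ((Fin n → ZMod 2) ⧸ C) :=
  AddMonoidAlgebra.mapDomainRingHom K (phi0 C)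

lemma psi_monomial (C : Submodule (ZMod 2) (Fin n → ZMod 2)) (e : Fin n →₀ ℕ) (c : K) :
    psi K C (monomial e c) = AddMonoidAlgebra.single (phi0 C e) c := by
  rw [← single_eq_monomial]
  show AddMonoidAlgebra.mapDomain (phi0 C) (AddMonoidAlgebra.single e c) = _
  rw [AddMonoidAlgebra.mapDomain_single]

lemma bar_expOf (c : Fin n → ZMod 2) : bar n (expOf c) = c := by
  funext j
  rw [bar_apply]
  simp only [expOf, Finsupp.coe_equivFunOnFinite_symm]
  exact ZMod.natCast_rightInverse (c j)

lemma psi_Xw (C : Submodule (ZMod 2) (Fin n → ZMod 2)) (c : Fin n → ZMod 2) :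
    psi K C (Xw K c) = AddMonoidAlgebra.single (Submodule.Quotient.mk c) 1 := by
  rw [Xw, psi_monomial, phi0_apply, bar_expOf]

lemma codeIdeal_le_ker (C : Submodule (ZMod 2) (Fin n → ZMod 2)) :
    codeIdeal K C ≤ RingHom.ker (psi K C) := by
  rw [codeIdeal, Ideal.span_le]
  rintro f (⟨c, c', hcc, rfl⟩ | ⟨j, rfl⟩)
  · simp only [SetLike.mem_coe, RingHom.mem_ker, map_sub, psi_Xw]
    rw [(Submodule.Quotient.eq C).mpr hcc, sub_self]
  · simp only [SetLike.mem_coe, RingHom.mem_ker, map_sub, map_one]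
    rw [X_pow_eq_monomial, psi_monomial, phi0_apply]
    have hb : bar n (Finsupp.single j 2) = 0 := by
      funext l
      rw [bar_apply]
      by_cases h : l = j
      · subst h; simp; decide
      · rw [Finsupp.single_apply, if_neg (fun hh => h hh.symm)]; simp
    rw [hb, sub_eq_zero]
    rfl

lemma psi_eq_sum (C : Submodule (ZMod 2) (Fin n → ZMod 2)) (f : MvPolynomial (Fin n) K) :
    psi K C f = ∑ e ∈ f.support, AddMonoidAlgebra.single (phi0 C e) (f.coeff e) := by
  conv_lhs => rw [f.as_sum, map_sum]
  exact Finset.sum_congr rfl fun e _ => psi_monomial C e _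

lemma coeff_eq_zero_of_psi (C : Submodule (ZMod 2) (Fin n → ZMod 2))
    (f : MvPolynomial (Fin n) K) (d : Fin n →₀ ℕ) (h0 : psi K C f = 0)
    (hd : ∀ e ∈ f.support, phi0 C e = phi0 C d → e = d) : f.coeff d = 0 := by
  by_cases hdf : d ∈ f.support
  · have h1 : AddMonoidAlgebra.coeff (∑ e ∈ f.support, AddMonoidAlgebra.single (phi0 C e) (f.coeff e)) (phi0 C d) = 0 := by
      rw [← psi_eq_sum, h0]; rfl
    rw [AddMonoidAlgebra.coeff_sum, Finsupp.finset_sum_apply, Finset.sum_eq_single_of_mem d hdf] at h1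
    · rwa [AddMonoidAlgebra.coeff_single, Finsupp.single_eq_same] at h1
    · intro e he hne
      rw [AddMonoidAlgebra.coeff_single]
      exact Finsupp.single_eq_of_ne' (fun hc => hne (hd e he hc))
  · exact notMem_support_iff.mp hdf

section LeadExp

variable {σ : Type*}

lemma leadExp_eq (m : MonomialOrder σ) {f : MvPolynomial σ K} {a : σ →₀ ℕ}
    (h1 : f.coeff a ≠ 0) (h2 : ∀ e ∈ f.support, m.toSyn e ≤ m.toSyn a) :
    leadExp m f = a := by
  have h : (f.support.sup fun d => m.toSyn d) = m.toSyn a :=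
    le_antisymm (Finset.sup_le h2)
      (Finset.le_sup (f := fun d => m.toSyn d) (mem_support_iff.mpr h1))
  rw [leadExp, h, m.toSyn.symm_apply_apply]

lemma leadExp_mem_support (m : MonomialOrder σ) {f : MvPolynomial σ K} (hf : f ≠ 0) :
    leadExp m f ∈ f.support := by
  obtain ⟨d, hd, he⟩ := Finset.exists_mem_eq_sup f.support
    (Finset.nonempty_iff_ne_empty.mpr (fun h => hf (support_eq_empty.mp h)))
    (fun d => m.toSyn d)
  rw [leadExp, he, m.toSyn.symm_apply_apply]; exact hd

lemma le_leadExp (m : MonomialOrder σ) {f : MvPolynomial σ K} {e : σ →₀ ℕ}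
    (he : e ∈ f.support) : m.toSyn e ≤ m.toSyn (leadExp m f) := by
  rw [leadExp, m.toSyn.apply_symm_apply]
  exact Finset.le_sup (f := fun d => m.toSyn d) he

end LeadExp

end CodeGBAux

namespace CodeGBAux

variable {K : Type*} [Field K] {n k : ℕ}

lemma expOf_apply (c : Fin n → ZMod 2) (j : Fin n) : expOf c j = (c j).val := by
  simp [expOf]

lemma expOf_le_one (c : Fin n → ZMod 2) (j : Fin n) : expOf c j ≤ 1 := by
  rw [expOf_apply]
  exact Nat.lt_succ_iff.mp (ZMod.val_lt (c j))

lemma expOf_mrow_lt (g : Fin k → Fin n → ZMod 2) (i : Fin k) {j : Fin n}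
    (hj : (j : ℕ) < k) : expOf (mrow g i) j = 0 := by
  rw [expOf_apply, mrow, if_pos hj]
  rfl

/-- `X_i - X^{m_i}` -/
noncomputable def f1 (K : Type*) [Field K] (hk : k ≤ n) (g : Fin k → Fin n → ZMod 2)
    (i : Fin k) : MvPolynomial (Fin n) K :=
  X (Fin.castLE hk i) - Xw K (mrow g i)

/-- `X_j ^ 2 - 1` -/
noncomputable def f2 (K : Type*) [Field K] {n : ℕ} (j : Fin n) : MvPolynomial (Fin n) K :=
  X j ^ 2 - 1

lemma expOf_mrow_ne (hk : k ≤ n) (g : Fin k → Fin n → ZMod 2) (i : Fin k) :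
    expOf (mrow g i) ≠ Finsupp.single (Fin.castLE hk i) 1 := by
  intro h
  have h2 := congrFun (congrArg (DFunLike.coe) h) (Fin.castLE hk i)
  rw [expOf_mrow_lt g i (by simpa using i.isLt), Finsupp.single_eq_same] at h2
  exact zero_ne_one h2

lemma coeff_f1_lead (hk : k ≤ n) (g : Fin k → Fin n → ZMod 2) (i : Fin k) :
    (f1 K hk g i).coeff (Finsupp.single (Fin.castLE hk i) 1) = 1 := by
  classical
  rw [f1, coeff_sub, coeff_X' , if_pos rfl, Xw, coeff_monomial,
    if_neg (expOf_mrow_ne hk g i), sub_zero]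

lemma support_f1 (hk : k ≤ n) (g : Fin k → Fin n → ZMod 2) (i : Fin k) :
    (f1 K hk g i).support ⊆ {Finsupp.single (Fin.castLE hk i) 1, expOf (mrow g i)} := by
  classical
  refine (MvPolynomial.support_sub _ _ _).trans ?_
  rw [support_X, Xw, support_monomial, if_neg (one_ne_zero (α := K))]
  intro x hx
  simpa using hx

lemma toSyn_lt_f1 (hk : k ≤ n) (g : Fin k → Fin n → ZMod 2) (i : Fin k) :
    (expOf (mrow g i)) ≺[MonomialOrder.lex] (Finsupp.single (Fin.castLE hk i) 1) := by
  rw [MonomialOrder.lex_lt_iff, Finsupp.Lex.lt_iff]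
  refine ⟨Fin.castLE hk i, fun j hj => ?_, ?_⟩
  · have hjk : (j : ℕ) < k := lt_of_lt_of_le hj (by simpa using i.isLt)
    show expOf (mrow g i) j = Finsupp.single (Fin.castLE hk i) 1 j
    rw [expOf_mrow_lt g i hjk, Finsupp.single_eq_of_ne' (fun h => absurd h.symm (ne_of_lt hj))]
  · show expOf (mrow g i) _ < Finsupp.single (Fin.castLE hk i) 1 _
    rw [expOf_mrow_lt g i (by simpa using i.isLt), Finsupp.single_eq_same]
    exact zero_lt_one

lemma leadExp_f1 (hk : k ≤ n) (g : Fin k → Fin n → ZMod 2) (i : Fin k) :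
    leadExp MonomialOrder.lex (f1 K hk g i) = Finsupp.single (Fin.castLE hk i) 1 := by
  refine leadExp_eq _ (by rw [coeff_f1_lead]; exact one_ne_zero) (fun e he => ?_)
  rcases Finset.mem_insert.mp (support_f1 hk g i he) with h | h
  · rw [h]
  · rw [Finset.mem_singleton.mp h]
    exact le_of_lt (toSyn_lt_f1 hk g i)

lemma leadTerm_f1 (hk : k ≤ n) (g : Fin k → Fin n → ZMod 2) (i : Fin k) :
    leadTerm MonomialOrder.lex (f1 K hk g i)
      = monomial (Finsupp.single (Fin.castLE hk i) 1) (1 : K) := by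
  rw [leadTerm, leadExp_f1, coeff_f1_lead]

lemma f1_ne_zero (hk : k ≤ n) (g : Fin k → Fin n → ZMod 2) (i : Fin k) :
    f1 K hk g i ≠ 0 := fun h => by
  have := coeff_f1_lead (K := K) hk g i
  rw [h, coeff_zero] at this
  exact zero_ne_one this

lemma coeff_f2_lead (j : Fin n) :
    (f2 K j).coeff (Finsupp.single j 2) = 1 := by
  classical
  rw [f2, coeff_sub, X_pow_eq_monomial, coeff_monomial, if_pos rfl, coeff_one,
    if_neg (fun h => by simpa using (Finsupp.single_eq_zero.mp h.symm)), sub_zero]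

lemma support_f2 (j : Fin n) :
    (f2 K j).support ⊆ {Finsupp.single j 2, 0} := by
  classical
  refine (MvPolynomial.support_sub _ _ _).trans ?_
  rw [X_pow_eq_monomial, support_monomial, if_neg (one_ne_zero (α := K))]
  intro x hx
  rcases Finset.mem_union.mp hx with h | h
  · simpa using Or.inl (Finset.mem_singleton.mp h)
  · have h1 : (1 : MvPolynomial (Fin n) K) = monomial 0 1 := by
      rw [← C_1, C_apply]
    rw [h1, support_monomial, if_neg (one_ne_zero (α := K))] at h
    simp only [Finset.mem_insert, Finset.mem_singleton]
    exact Or.inr (Finset.mem_singleton.mp h)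

lemma leadExp_f2 (j : Fin n) :
    leadExp MonomialOrder.lex (f2 K j) = Finsupp.single j 2 := by
  refine leadExp_eq _ (by rw [coeff_f2_lead]; exact one_ne_zero) (fun e he => ?_)
  rcases Finset.mem_insert.mp (support_f2 j he) with h | h
  · rw [h]
  · rw [Finset.mem_singleton.mp h, map_zero]
    exact bot_le
lemma leadTerm_f2 (j : Fin n) :
    leadTerm MonomialOrder.lex (f2 K j) = monomial (Finsupp.single j 2) (1 : K) := by
  rw [leadTerm, leadExp_f2, coeff_f2_lead]

lemma f2_ne_zero (j : Fin n) : f2 K j ≠ 0 := fun h => by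
  have := coeff_f2_lead (K := K) j
  rw [h, coeff_zero] at this
  exact zero_ne_one this

end CodeGBAux

namespace CodeGBAux

variable {K : Type*} [Field K] {n k : ℕ}

lemma code_vanish {C : Submodule (ZMod 2) (Fin n → ZMod 2)} {g : Fin k → Fin n → ZMod 2}
    (hk : k ≤ n) (hg : IsStandardGenMatrix hk C g) {v : Fin n → ZMod 2} (hv : v ∈ C)
    (h0 : ∀ j : Fin n, (j : ℕ) < k → v j = 0) : v = 0 := by
  classical
  rw [hg.1] at hv
  obtain ⟨a, ha⟩ := (Submodule.mem_span_range_iff_exists_fun (ZMod 2)).mp hv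
  have hz : ∀ i : Fin k, a i = 0 := by
    intro i
    have h1 : v (Fin.castLE hk i) = ∑ i' : Fin k, a i' * g i' (Fin.castLE hk i) := by
      rw [← ha]
      simp [Finset.sum_apply]
    have h2 : v (Fin.castLE hk i) = a i := by
      rw [h1]
      rw [Finset.sum_congr rfl (fun i' _ => by rw [hg.2 i' i])]
      simp [Finset.sum_ite_eq]
    rw [← h2, h0 _ (by simpa using i.isLt)]
  rw [← ha]
  simp [hz]

lemma lt_of_class_eq {C : Submodule (ZMod 2) (Fin n → ZMod 2)} {g : Fin k → Fin n → ZMod 2}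
    (hk : k ≤ n) (hg : IsStandardGenMatrix hk C g) {d e : Fin n →₀ ℕ}
    (hd1 : ∀ j : Fin n, (j : ℕ) < k → d j = 0) (hd2 : ∀ j, d j ≤ 1)
    (hcl : phi0 C e = phi0 C d) (hne : e ≠ d) : toLex d < toLex e := by
  classical
  by_cases hS : (Finset.univ.filter (fun j : Fin n => (j : ℕ) < k ∧ e j ≠ 0)).Nonempty
  · set S := Finset.univ.filter (fun j : Fin n => (j : ℕ) < k ∧ e j ≠ 0) with hSdef
    set i0 := S.min' hS with hi0
    have hmem : i0 ∈ Finset.univ.filter (fun j : Fin n => (j : ℕ) < k ∧ e j ≠ 0) :=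
      S.min'_mem hS
    rw [Finset.mem_filter] at hmem
    rw [Finsupp.Lex.lt_iff]
    refine ⟨i0, fun j hj => ?_, ?_⟩
    · show d j = e j
      have hjk : (j : ℕ) < k := lt_trans hj hmem.2.1
      rw [hd1 j hjk]
      by_contra hje
      have hjS : j ∈ S := Finset.mem_filter.mpr
        ⟨Finset.mem_univ j, hjk, fun h => hje (h ▸ rfl)⟩
      exact absurd (S.min'_le j hjS) (not_le.mpr hj)
    · show d i0 < e i0
      rw [hd1 i0 hmem.2.1]
      exact Nat.pos_of_ne_zero hmem.2.2
  · rw [Finset.filter_nonempty_iff] at hS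
    push_neg at hS
    have he0 : ∀ j : Fin n, (j : ℕ) < k → e j = 0 := fun j hj => hS j (Finset.mem_univ j) hj
    have hsub : bar n e - bar n d ∈ C := by
      rw [phi0_apply, phi0_apply] at hcl
      exact (Submodule.Quotient.eq C).mp hcl
    have hbar : bar n e = bar n d := by
      rw [← sub_eq_zero]
      refine code_vanish hk hg hsub (fun j hj => ?_)
      show bar n e j - bar n d j = 0
      rw [bar_apply, bar_apply, he0 j hj, hd1 j hj]
      simp
    have hle : d ≤ e := by
      rw [Finsupp.le_def]
      intro j
      by_cases hj : (j : ℕ) < k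
      · rw [hd1 j hj]; exact Nat.zero_le _
      · have h1 : d j = (bar n d j).val := by
          rw [bar_apply, ZMod.val_natCast, Nat.mod_eq_of_lt (Nat.lt_succ_of_le (hd2 j))]
        rw [h1, ← hbar, bar_apply, ZMod.val_natCast]
        exact Nat.mod_le _ _
    exact lt_of_le_of_ne (Finsupp.toLex_monotone hle)
      (fun h => hne (toLex.injective h).symm)

end CodeGBAux

namespace CodeGBAux

variable {K : Type*} [Field K] {n k : ℕ}

lemma X_eq_Xw (i0 : Fin n) : (X i0 : MvPolynomial (Fin n) K) = Xw K (Pi.single i0 1) := by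
  have h : expOf (Pi.single i0 (1 : ZMod 2)) = Finsupp.single i0 1 := by
    ext j
    rw [expOf_apply, Finsupp.single_apply]
    by_cases h : j = i0
    · subst h; simp; decide
    · rw [Pi.single_eq_of_ne h, if_neg (fun hh => h hh.symm)]; rfl
  rw [Xw, h]
  rfl

lemma row_mem {C : Submodule (ZMod 2) (Fin n → ZMod 2)} {g : Fin k → Fin n → ZMod 2}
    (hk : k ≤ n) (hg : IsStandardGenMatrix hk C g) (i : Fin k) : g i ∈ C := by
  rw [hg.1]
  exact Submodule.subset_span ⟨i, rfl⟩

lemma sub_eq_row {C : Submodule (ZMod 2) (Fin n → ZMod 2)} {g : Fin k → Fin n → ZMod 2}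
    (hk : k ≤ n) (hg : IsStandardGenMatrix hk C g) (i : Fin k) :
    Pi.single (Fin.castLE hk i) (1 : ZMod 2) - mrow g i = g i := by
  funext j
  rw [Pi.sub_apply]
  by_cases hj : (j : ℕ) < k
  · have hj' : j = Fin.castLE hk ⟨(j : ℕ), hj⟩ := by
      apply Fin.ext
      rfl
    simp only [mrow, if_pos hj, sub_zero]
    rw [hj', hg.2 i ⟨(j : ℕ), hj⟩, Pi.single_apply]
    by_cases h : i = ⟨(j : ℕ), hj⟩
    · rw [if_pos (by rw [h]), if_pos h]
    · rw [if_neg (fun hh => h (Fin.castLE_injective hk hh).symm), if_neg h]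
  · simp only [mrow, if_neg hj]
    rw [Pi.single_eq_of_ne (fun hh => hj (by rw [hh]; simpa using i.isLt))]
    have h2 : ∀ a : ZMod 2, 0 - a = a := by decide
    exact h2 _

lemma f1_mem {C : Submodule (ZMod 2) (Fin n → ZMod 2)} {g : Fin k → Fin n → ZMod 2}
    (hk : k ≤ n) (hg : IsStandardGenMatrix hk C g) (i : Fin k) :
    f1 K hk g i ∈ codeIdeal K C := by
  rw [f1, X_eq_Xw]
  refine Ideal.subset_span (Or.inl ⟨_, _, ?_, rfl⟩)
  rw [sub_eq_row hk hg i]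
  exact row_mem hk hg i

lemma f2_mem {C : Submodule (ZMod 2) (Fin n → ZMod 2)} (j : Fin n) :
    f2 K j ∈ codeIdeal K C := Ideal.subset_span (Or.inr ⟨j, rfl⟩)

/-- the set of leading exponents -/
def Eset (n k : ℕ) : Set (Fin n →₀ ℕ) :=
  {s | ∃ j : Fin n, ((j : ℕ) < k ∧ s = Finsupp.single j 1) ∨
    (k ≤ (j : ℕ) ∧ s = Finsupp.single j 2)}

lemma mem_gbSet_iff (hk : k ≤ n) {g : Fin k → Fin n → ZMod 2} {f : MvPolynomial (Fin n) K} :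
    f ∈ gbSet K hk g ↔
      (∃ i : Fin k, f = f1 K hk g i) ∨ (∃ j : Fin n, k ≤ (j : ℕ) ∧ f = f2 K j) := by
  constructor
  · rintro (⟨i, rfl⟩ | ⟨j, hj, rfl⟩)
    · exact Or.inl ⟨i, rfl⟩
    · exact Or.inr ⟨j, hj, rfl⟩
  · rintro (⟨i, rfl⟩ | ⟨j, hj, rfl⟩)
    · exact Or.inl ⟨i, rfl⟩
    · exact Or.inr ⟨j, hj, rfl⟩

lemma leadTerm_of_mem_gbSet (hk : k ≤ n) {g : Fin k → Fin n → ZMod 2}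
    {q : MvPolynomial (Fin n) K} (hq : q ∈ gbSet K hk g) :
    leadTerm MonomialOrder.lex q = monomial (leadExp MonomialOrder.lex q) 1 := by
  rcases (mem_gbSet_iff hk).mp hq with ⟨i, rfl⟩ | ⟨j, _, rfl⟩
  · rw [leadTerm_f1, leadExp_f1]
  · rw [leadTerm_f2, leadExp_f2]

lemma gbSet_ne_zero (hk : k ≤ n) {g : Fin k → Fin n → ZMod 2}
    {q : MvPolynomial (Fin n) K} (hq : q ∈ gbSet K hk g) : q ≠ 0 := by
  rcases (mem_gbSet_iff hk).mp hq with ⟨i, rfl⟩ | ⟨j, _, rfl⟩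
  · exact f1_ne_zero hk g i
  · exact f2_ne_zero j

lemma leadExp_mem_Eset (hk : k ≤ n) {g : Fin k → Fin n → ZMod 2}
    {q : MvPolynomial (Fin n) K} (hq : q ∈ gbSet K hk g) :
    leadExp MonomialOrder.lex q ∈ Eset n k := by
  rcases (mem_gbSet_iff hk).mp hq with ⟨i, rfl⟩ | ⟨j, hj, rfl⟩
  · exact ⟨Fin.castLE hk i, Or.inl ⟨by simpa using i.isLt, (leadExp_f1 hk g i)⟩⟩
  · exact ⟨j, Or.inr ⟨hj, leadExp_f2 j⟩⟩

lemma leadTerm_image_gbSet (hk : k ≤ n) (g : Fin k → Fin n → ZMod 2) :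
    leadTerm MonomialOrder.lex '' (gbSet K hk g)
      = (fun s => monomial s (1 : K)) '' Eset n k := by
  ext p
  constructor
  · rintro ⟨q, hq, rfl⟩
    exact ⟨leadExp MonomialOrder.lex q, leadExp_mem_Eset hk hq,
      (leadTerm_of_mem_gbSet hk hq).symm⟩
  · rintro ⟨s, ⟨j, ⟨hjk, rfl⟩ | ⟨hjk, rfl⟩⟩, rfl⟩
    · refine ⟨f1 K hk g ⟨(j : ℕ), hjk⟩, Or.inl ⟨_, rfl⟩, ?_⟩
      rw [leadTerm_f1]
      congr 2
    · exact ⟨f2 K j, Or.inr ⟨j, hjk, rfl⟩, leadTerm_f2 j⟩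

lemma gbSet_subset_codeIdeal {C : Submodule (ZMod 2) (Fin n → ZMod 2)}
    {g : Fin k → Fin n → ZMod 2} (hk : k ≤ n) (hg : IsStandardGenMatrix hk C g) :
    gbSet K hk g ⊆ (codeIdeal K C : Set (MvPolynomial (Fin n) K)) := by
  intro q hq
  rcases (mem_gbSet_iff hk).mp hq with ⟨i, rfl⟩ | ⟨j, _, rfl⟩
  · exact f1_mem hk hg i
  · exact f2_mem j

lemma gbSet_finite (hk : k ≤ n) (g : Fin k → Fin n → ZMod 2) :
    (gbSet K hk g).Finite := by
  apply Set.Finite.union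
  · exact Set.finite_range _
  · refine (Set.finite_range (fun j : Fin n => (X j ^ 2 - 1 : MvPolynomial (Fin n) K))).subset ?_
    rintro f ⟨j, _, rfl⟩
    exact ⟨j, rfl⟩

end CodeGBAux

open CodeGBAux in
/-- for a binary `[n,k]` code with generating matrix in standard form,
the set `{X_i − X^{m_i} : 1 ≤ i ≤ k} ∪ {X_j² − 1 : k+1 ≤ j ≤ n}` is the reduced Groebner
basis of the code ideal `I_C` with respect to the lexicographic order `X_1 > ⋯ > X_n`. -/
theorem code_ideal_reduced_groebner_basis (K : Type*) [Field K] {n k : ℕ} (hk : k ≤ n)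
    (C : Submodule (ZMod 2) (Fin n → ZMod 2)) (g : Fin k → Fin n → ZMod 2)
    (hg : IsStandardGenMatrix hk C g) :
    IsGroebnerBasis MonomialOrder.lex (codeIdeal K C) (gbSet K hk g) ∧
      IsReducedGB MonomialOrder.lex (gbSet K hk g) := by
  classical
  constructor
  · refine ⟨CodeGBAux.gbSet_finite hk g, CodeGBAux.gbSet_subset_codeIdeal hk hg, ?_⟩
    apply le_antisymm
    · apply Ideal.span_mono
      rintro p ⟨q, hq, rfl⟩
      exact ⟨q, ⟨CodeGBAux.gbSet_subset_codeIdeal hk hg hq, CodeGBAux.gbSet_ne_zero hk hq⟩, rfl⟩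
    · rw [Ideal.span_le]
      rintro p ⟨f, ⟨hfI, hf0⟩, rfl⟩
      rw [CodeGBAux.leadTerm_image_gbSet]
      set d := leadExp MonomialOrder.lex f with hd
      by_cases hcase : ∃ j : Fin n, ((j : ℕ) < k ∧ 1 ≤ d j) ∨ (k ≤ (j : ℕ) ∧ 2 ≤ d j)
      · obtain ⟨j, hj⟩ := hcase
        show monomial d (f.coeff d) ∈ _
        rw [SetLike.mem_coe, mem_ideal_span_monomial_image]
        intro xi hxi
        have hxid : xi = d := by
          rw [support_monomial] at hxi
          by_cases h0 : f.coeff d = 0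
          · rw [if_pos h0] at hxi; exact absurd hxi (Finset.notMem_empty xi)
          · rw [if_neg h0] at hxi; exact Finset.mem_singleton.mp hxi
        subst hxid
        rcases hj with ⟨h1, h2⟩ | ⟨h1, h2⟩
        · exact ⟨Finsupp.single j 1, ⟨j, Or.inl ⟨h1, rfl⟩⟩, Finsupp.single_le_iff.mpr h2⟩
        · exact ⟨Finsupp.single j 2, ⟨j, Or.inr ⟨h1, rfl⟩⟩, Finsupp.single_le_iff.mpr h2⟩
      · exfalso
        push_neg at hcase
        have hd1 : ∀ j : Fin n, (j : ℕ) < k → d j = 0 := fun j hj =>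
          Nat.lt_one_iff.mp ((hcase j).1 hj)
        have hd2 : ∀ j : Fin n, d j ≤ 1 := by
          intro j
          by_cases hj : (j : ℕ) < k
          · rw [hd1 j hj]; exact Nat.zero_le 1
          · exact Nat.lt_succ_iff.mp ((hcase j).2 (le_of_not_gt hj))
        have hpsi : psi K C f = 0 :=
          RingHom.mem_ker.mp (CodeGBAux.codeIdeal_le_ker C hfI)
        have hds : d ∈ f.support := CodeGBAux.leadExp_mem_support _ hf0
        have hcoef : f.coeff d = 0 := by
          refine CodeGBAux.coeff_eq_zero_of_psi C f d hpsi ?_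
          intro e he hcl
          by_contra hne
          have hlt := CodeGBAux.lt_of_class_eq hk hg hd1 hd2 hcl hne
          have hle := CodeGBAux.le_leadExp MonomialOrder.lex he
          rw [← hd] at hle
          exact absurd hlt (not_lt.mpr hle)
        exact (MvPolynomial.mem_support_iff.mp hds) hcoef
  · intro p hp
    constructor
    · rcases (CodeGBAux.mem_gbSet_iff hk).mp hp with ⟨i, rfl⟩ | ⟨j, hj, rfl⟩
      · rw [CodeGBAux.leadExp_f1]; exact CodeGBAux.coeff_f1_lead hk g i
      · rw [CodeGBAux.leadExp_f2]; exact CodeGBAux.coeff_f2_lead j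
    · intro c hc hmem
      have himg : leadTerm MonomialOrder.lex '' (gbSet K hk g \ {p})
          = (fun s => monomial s (1 : K)) ''
              (leadExp MonomialOrder.lex '' (gbSet K hk g \ {p})) := by
        rw [Set.image_image]
        exact Set.image_congr fun q hq => CodeGBAux.leadTerm_of_mem_gbSet hk hq.1
      rw [himg, mem_ideal_span_monomial_image] at hmem
      have hcsupp : c ∈ (monomial c (1 : K)).support := by
        rw [support_monomial, if_neg (one_ne_zero (α := K))]
        exact Finset.mem_singleton_self c
      obtain ⟨si, ⟨q, ⟨hqG, hqp⟩, rfl⟩, hle⟩ := hmem c hcsupp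
      have hqp' : q ≠ p := fun h => hqp (Set.mem_singleton_iff.mpr h)
      rcases (CodeGBAux.mem_gbSet_iff hk).mp hp with ⟨i, rfl⟩ | ⟨j0, hj0, rfl⟩
      · rcases Finset.mem_insert.mp (CodeGBAux.support_f1 hk g i hc) with hcv | hcv
        · -- c = X_i exponent
          subst hcv
          rcases (CodeGBAux.mem_gbSet_iff hk).mp hqG with ⟨i', rfl⟩ | ⟨j', hj', rfl⟩
          · rw [CodeGBAux.leadExp_f1] at hle
            have h := Finsupp.le_def.mp hle (Fin.castLE hk i')
            rw [Finsupp.single_eq_same] at h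
            have heq : Fin.castLE hk i = Fin.castLE hk i' := by
              by_contra hne
              rw [Finsupp.single_eq_of_ne' hne] at h
              omega
            have : i = i' := Fin.castLE_injective hk heq
            exact hqp' (by rw [this])
          · rw [CodeGBAux.leadExp_f2] at hle
            have h := Finsupp.le_def.mp hle j'
            rw [Finsupp.single_eq_same] at h
            have h2 : Finsupp.single (Fin.castLE hk i) 1 j' ≤ 1 := by
              rw [Finsupp.single_apply]
              split <;> omega
            omega
        · -- c = expOf (mrow g i)
          rw [Finset.mem_singleton.mp hcv] at hle
          rcases (CodeGBAux.mem_gbSet_iff hk).mp hqG with ⟨i', rfl⟩ | ⟨j', hj', rfl⟩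
          · rw [CodeGBAux.leadExp_f1] at hle
            have h := Finsupp.le_def.mp hle (Fin.castLE hk i')
            rw [Finsupp.single_eq_same,
              CodeGBAux.expOf_mrow_lt g i (by simpa using i'.isLt)] at h
            omega
          · rw [CodeGBAux.leadExp_f2] at hle
            have h := Finsupp.le_def.mp hle j'
            rw [Finsupp.single_eq_same] at h
            have h2 := CodeGBAux.expOf_le_one (mrow g i) j'
            omega
      · rcases Finset.mem_insert.mp (CodeGBAux.support_f2 j0 hc) with hcv | hcv
        · subst hcv
          rcases (CodeGBAux.mem_gbSet_iff hk).mp hqG with ⟨i', rfl⟩ | ⟨j', hj', rfl⟩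
          · rw [CodeGBAux.leadExp_f1] at hle
            have h := Finsupp.le_def.mp hle (Fin.castLE hk i')
            rw [Finsupp.single_eq_same] at h
            have hne : j0 ≠ Fin.castLE hk i' := by
              intro hh
              have : (j0 : ℕ) < k := by rw [hh]; simpa using i'.isLt
              omega
            rw [Finsupp.single_eq_of_ne' hne] at h
            omega
          · rw [CodeGBAux.leadExp_f2] at hle
            have h := Finsupp.le_def.mp hle j'
            rw [Finsupp.single_eq_same] at h
            have heq : j0 = j' := by
              by_contra hne
              rw [Finsupp.single_eq_of_ne' hne] at h
              omega
            exact hqp' (by rw [heq])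
        · rw [Finset.mem_singleton.mp hcv] at hle
          rcases (CodeGBAux.mem_gbSet_iff hk).mp hqG with ⟨i', rfl⟩ | ⟨j', hj', rfl⟩
          · rw [CodeGBAux.leadExp_f1] at hle
            have h := Finsupp.le_def.mp hle (Fin.castLE hk i')
            rw [Finsupp.single_eq_same] at h
            simp at h
          · rw [CodeGBAux.leadExp_f2] at hle
            have h := Finsupp.le_def.mp hle j'
            rw [Finsupp.single_eq_same] at h
            simp at h
end

section
/- Let C be a t-error-correcting binary [n,k,d]-code (2t+1 ≤ d) with reduced Groebner basis G as in the standard-form construction, and let v ∈ F_2^n be a received word with at most t errors, i.e., there is c ∈ C with d(v,c) ≤ t. If the remainder of X^v − 1 on division by G represents a vector of weight at most t, then (X^v − 1) − remainder represents the unique codeword closest to v, and the error vector v − c is supported in the last n − k coordinates. -/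
/-!
Sending `X^a` to the class of `a mod 2` in the group algebra `K[F₂ⁿ ⧸ C]` kills the code ideal,
so `X^v − X^e ∈ I_C` forces `v − e ∈ C`; as `w(e) ≤ t` and `2t < d`, the codeword `v − e` is the
only one within distance `t` of `v`. For `i ≤ k` the basis element `X_i − X^{m_i}` has leading
monomial `X_i` in the lex order, because `m_i` lives on the last `n − k` coordinates; since no
monomial of the remainder is divisible by a leading monomial of the basis, `X_i ∤ X^e`.
-/

open MvPolynomial
open scoped MonomialOrder

section CodeQuotient

variable (K : Type*) [Field K] {n : ℕ} (C : Submodule (ZMod 2) (Fin n → ZMod 2))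

noncomputable def reduceMod : (Fin n →₀ ℕ) →+ (Fin n → ZMod 2) ⧸ C :=
  C.mkQ.toAddMonoidHom.comp
    (AddMonoidHom.pi fun i => (Nat.castAddMonoidHom (ZMod 2)).comp (Finsupp.applyAddHom i))

lemma reduceMod_apply (a : Fin n →₀ ℕ) :
    reduceMod C a = Submodule.Quotient.mk fun i => (a i : ZMod 2) :=
  rfl

noncomputable def codeQuotientHom :
    MvPolynomial (Fin n) K →+* AddMonoidAlgebra K ((Fin n → ZMod 2) ⧸ C) :=
  AddMonoidAlgebra.mapDomainRingHom K (reduceMod C)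

lemma codeQuotientHom_monomial (a : Fin n →₀ ℕ) :
    codeQuotientHom K C (monomial a 1) = AddMonoidAlgebra.single (reduceMod C a) 1 :=
  AddMonoidAlgebra.mapDomain_single

lemma codeQuotientHom_Xw (u : Fin n → ZMod 2) :
    codeQuotientHom K C (Xw K u) = AddMonoidAlgebra.single (Submodule.Quotient.mk u) 1 := by
  rw [Xw, codeQuotientHom_monomial]
  simp [reduceMod_apply, expOf]

lemma codeIdeal_le_ker_codeQuotientHom : codeIdeal K C ≤ RingHom.ker (codeQuotientHom K C) := by
  rw [codeIdeal, Ideal.span_le]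
  rintro f (⟨c, c', hcc, rfl⟩ | ⟨i, rfl⟩)
  · rw [SetLike.mem_coe, RingHom.mem_ker, map_sub, codeQuotientHom_Xw, codeQuotientHom_Xw,
      (Submodule.Quotient.eq C).mpr hcc, sub_self]
  · have hsq : reduceMod C (Finsupp.single i 2) = 0 := by
      rw [reduceMod_apply, Submodule.Quotient.mk_eq_zero]
      convert C.zero_mem
      simp [Finsupp.single_apply, show (2 : ZMod 2) = 0 from rfl]
    rw [SetLike.mem_coe, RingHom.mem_ker, X_pow_eq_monomial, map_sub, codeQuotientHom_monomial,
      hsq, map_one, ← AddMonoidAlgebra.one_def, sub_self]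

variable {K C}

lemma sub_mem_of_Xw_sub_Xw_mem_codeIdeal {u w : Fin n → ZMod 2}
    (h : Xw K u - Xw K w ∈ codeIdeal K C) : u - w ∈ C := by
  have hker := codeIdeal_le_ker_codeQuotientHom K C h
  rw [RingHom.mem_ker, map_sub, codeQuotientHom_Xw, codeQuotientHom_Xw, sub_eq_zero,
    AddMonoidAlgebra.single_left_inj one_ne_zero] at hker
  exact (Submodule.Quotient.eq C).mp hker

end CodeQuotient

section LeadingExponent

variable {σ K : Type*} [Field K]

lemma leadExp_eq_degree (m : MonomialOrder σ) (f : MvPolynomial σ K) :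
    leadExp m f = m.degree f :=
  rfl

lemma leadExp_X_sub_monomial {m : MonomialOrder σ} {j : σ} {b : σ →₀ ℕ}
    (hb : b ≺[m] Finsupp.single j 1) :
    leadExp m (X j - monomial b (1 : K)) = Finsupp.single j 1 := by
  classical
  rw [leadExp_eq_degree, m.degree_sub_of_lt, m.degree_X]
  rwa [m.degree_X, m.degree_monomial, if_neg one_ne_zero]

lemma lex_lt_single_of_forall_le_eq_zero [LinearOrder σ] [WellFoundedGT σ]
    {b : σ →₀ ℕ} {j : σ} (hb : ∀ i ≤ j, b i = 0) :
    b ≺[MonomialOrder.lex] Finsupp.single j 1 := by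
  rw [MonomialOrder.lex_lt_iff, Finsupp.Lex.lt_iff]
  refine ⟨j, fun i hij => ?_, ?_⟩
  · simp [hb i hij.le, hij.ne']
  · simp [hb j le_rfl]

lemma leadExp_gbSet_generator {n k : ℕ} (hk : k ≤ n) (g : Fin k → Fin n → ZMod 2) (i : Fin k) :
    leadExp MonomialOrder.lex (X (Fin.castLE hk i) - Xw K (mrow g i)) =
      Finsupp.single (Fin.castLE hk i) 1 := by
  refine leadExp_X_sub_monomial (lex_lt_single_of_forall_le_eq_zero fun l hl => ?_)
  have hlk : (l : ℕ) < k := lt_of_le_of_lt (Fin.le_def.mp hl) i.isLt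
  simp [expOf, mrow, hlk]

end LeadingExponent

section Remainder

variable {K : Type*} [Field K] {n : ℕ}

lemma expOf_eq_zero_iff {u : Fin n → ZMod 2} : expOf u = 0 ↔ u = 0 := by
  simp [expOf, funext_iff, Finsupp.ext_iff, ZMod.val_eq_zero]

lemma expOf_mem_support_Xw_sub_one {u : Fin n → ZMod 2} (hu : u ≠ 0) :
    expOf u ∈ (Xw K u - 1).support := by
  rw [mem_support_iff, coeff_sub, Xw, coeff_monomial, if_pos rfl, coeff_one,
    if_neg (Ne.symm (expOf_eq_zero_iff.not.mpr hu)), sub_zero]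
  exact one_ne_zero

lemma eq_zero_of_isRemainder_Xw_sub_one {m : MonomialOrder (Fin n)}
    {I : Ideal (MvPolynomial (Fin n) K)} {G : Set (MvPolynomial (Fin n) K)}
    {f : MvPolynomial (Fin n) K} {e : Fin n → ZMod 2} (hr : IsRemainder m I G f (Xw K e - 1))
    {p : MvPolynomial (Fin n) K} (hpG : p ∈ G) {j : Fin n}
    (hp : leadExp m p = Finsupp.single j 1) : e j = 0 := by
  by_contra hej
  have hp0 : p ≠ 0 := by
    rintro rfl
    rw [leadExp_eq_degree, m.degree_zero] at hp
    exact Finsupp.single_ne_zero.mpr one_ne_zero hp.symm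
  refine hr.2 _ (expOf_mem_support_Xw_sub_one fun he => hej (by simp [he])) p hpG hp0 ?_
  rw [hp, Finsupp.single_le_iff]
  exact Nat.one_le_iff_ne_zero.mpr ((ZMod.val_ne_zero _).mpr hej)

end Remainder

theorem lt_hammingDist_of_ne {ι R : Type*} [Fintype ι] [Ring R] [DecidableEq R]
    {C : Submodule R (ι → R)} {d t : ℕ} (hd : ∀ x ∈ C, x ≠ 0 → d ≤ hammingNorm x)
    (ht : 2 * t + 1 ≤ d) {v c c' : ι → R} (hc : c ∈ C) (hvc : hammingDist v c ≤ t)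
    (hc' : c' ∈ C) (hne : c' ≠ c) : t < hammingDist v c' := by
  have hcc' : d ≤ hammingDist c c' := by
    rw [hammingDist_eq_hammingNorm, neg_add_eq_sub]
    exact hd _ (C.sub_mem hc' hc) (sub_ne_zero.mpr hne)
  have := hammingDist_triangle c v c'
  rw [hammingDist_comm c v] at this
  omega

theorem decode_low_weight_remainder_general (K : Type*) [Field K] {n k : ℕ} (hk : k ≤ n)
    (C : Submodule (ZMod 2) (Fin n → ZMod 2)) (g : Fin k → Fin n → ZMod 2)
    (d t : ℕ)
    (hd : ∀ x ∈ C, x ≠ 0 → d ≤ hammingNorm x) (ht : 2 * t + 1 ≤ d)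
    (v : Fin n → ZMod 2)
    (e : Fin n → ZMod 2)
    (hrem : IsRemainder MonomialOrder.lex (codeIdeal K C) (gbSet K hk g)
      (Xw K v - 1) (Xw K e - 1))
    (hwe : hammingNorm e ≤ t) :
    v - e ∈ C ∧ (∀ c' ∈ C, c' ≠ v - e → t < hammingDist v c') ∧
      ∀ j : Fin n, (j : ℕ) < k → e j = 0 := by
  have hcode : v - e ∈ C :=
    sub_mem_of_Xw_sub_Xw_mem_codeIdeal (by simpa only [sub_sub_sub_cancel_right] using hrem.1)
  have hdist : hammingDist v (v - e) ≤ t := by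
    rwa [hammingDist_comm, hammingDist_eq_hammingNorm, neg_add_eq_sub, sub_sub_cancel]
  refine ⟨hcode, fun c' hc' hne => lt_hammingDist_of_ne hd ht hcode hdist hc' hne, fun j hj => ?_⟩
  exact eq_zero_of_isRemainder_Xw_sub_one hrem (Or.inl ⟨⟨j, hj⟩, rfl⟩)
    (leadExp_gbSet_generator hk g ⟨j, hj⟩)

/-- let `C` be a `t`-error-correcting binary `[n,k,d]` code (`2t+1 ≤ d`)
with standard-form reduced Groebner basis `gbSet`, and let `v` be a received word with at
most `t` errors. If the remainder `X^e − 1` of `X^v − 1` on division by the basis has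
weight `w(e) ≤ t`, then `v − e` is the unique codeword closest to `v` (any other codeword
is at distance `> t`), and the error vector `e` is supported in the last `n − k`
coordinates. -/
theorem decode_low_weight_remainder (K : Type*) [Field K] {n k : ℕ} (hk : k ≤ n)
    (C : Submodule (ZMod 2) (Fin n → ZMod 2)) (g : Fin k → Fin n → ZMod 2)
    (hg : IsStandardGenMatrix hk C g) (d t : ℕ)
    (hd : ∀ x ∈ C, x ≠ 0 → d ≤ hammingNorm x) (ht : 2 * t + 1 ≤ d)
    (v : Fin n → ZMod 2) (hv : ∃ c ∈ C, hammingDist v c ≤ t)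
    (e : Fin n → ZMod 2)
    (hrem : IsRemainder MonomialOrder.lex (codeIdeal K C) (gbSet K hk g)
      (Xw K v - 1) (Xw K e - 1))
    (hwe : hammingNorm e ≤ t) :
    v - e ∈ C ∧ (∀ c' ∈ C, c' ≠ v - e → t < hammingDist v c') ∧
      ∀ j : Fin n, (j : ℕ) < k → e j = 0 :=
  decode_low_weight_remainder_general K hk C g d t hd ht v e hrem hwe
end

section
/- For the code ideal I_C of a binary [n,k]-code C and its standard-form reduced Groebner basis G (lex order X_1 > ... > X_n), two words u, v ∈ F_2^n satisfy u − v ∈ C if and only if the remainders of X^u − 1 and X^v − 1 on division by G coincide. -/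
/-!
Send `K[X_1, …, X_n]` to the group algebra `K[F_2^n / C]` by `X^d ↦ [d mod 2]`; the code ideal
lies in the kernel. A remainder on division by `gbSet` only involves monomials `X^d` with `d`
zero on the first `k` coordinates and at most `1` elsewhere, and because the generator matrix is
in standard form distinct such `d` lie in distinct cosets of `C`. So the map is injective on
remainders, whence `ru = rv ↔ X^u - X^v ∈ I_C ↔ u - v ∈ C`.
-/

open MvPolynomial
open scoped MonomialOrder

noncomputable def parityHom (σ : Type*) : (σ →₀ ℕ) →+ (σ → ZMod 2) :=
  AddMonoidHom.pi fun j => (Nat.castAddMonoidHom (ZMod 2)).comp (Finsupp.applyAddHom j)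

@[simp]
theorem parityHom_apply {σ : Type*} (d : σ →₀ ℕ) (j : σ) : parityHom σ d j = d j :=
  rfl

theorem parityHom_expOf {n : ℕ} (w : Fin n → ZMod 2) : parityHom (Fin n) (expOf w) = w :=
  funext fun j => ZMod.natCast_zmod_val (w j)

-- `leadExp m` unfolds to `m.degree`, so Mathlib's degree lemmas apply to `IsRemainder`.
theorem IsRemainder.not_degree_le {σ K : Type*} [Field K] {m : MonomialOrder σ}
    {I : Ideal (MvPolynomial σ K)} {G : Set (MvPolynomial σ K)} {f r : MvPolynomial σ K}
    (hr : IsRemainder m I G f r) {c : σ →₀ ℕ} (hc : c ∈ r.support) {b : MvPolynomial σ K}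
    (hb : b ∈ G) (hdeg : m.degree b ≠ 0) : ¬ m.degree b ≤ c :=
  hr.2 c hc b hb (m.ne_zero_of_degree_ne_zero hdeg)

theorem Finsupp.toLex_lt_toLex_single {σ : Type*} [LinearOrder σ] {d : σ →₀ ℕ} {i : σ}
    {a : ℕ} (hd : ∀ j ≤ i, d j = 0) (ha : a ≠ 0) : toLex d < toLex (single i a) :=
  Finsupp.Lex.lt_iff.mpr ⟨i, fun j hj => by simp [hd j hj.le, hj.ne],
    by simpa [hd i le_rfl] using Nat.pos_of_ne_zero ha⟩

theorem lex_degree_X_sq_sub_one {σ R : Type*} [CommRing R] [Nontrivial R] [LinearOrder σ] [WellFoundedGT σ]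
    (j : σ) : MonomialOrder.lex.degree (X j ^ 2 - 1 : MvPolynomial σ R) = Finsupp.single j 2 := by
  classical
  have hX : MonomialOrder.lex.degree (X j ^ 2 : MvPolynomial σ R) = Finsupp.single j 2 := by
    rw [X_pow_eq_monomial, MonomialOrder.degree_monomial, if_neg one_ne_zero]
  have hlt : MonomialOrder.lex.degree (1 : MvPolynomial σ R) ≺[MonomialOrder.lex]
      MonomialOrder.lex.degree (X j ^ 2 : MvPolynomial σ R) := by
    rw [hX, MonomialOrder.degree_one, MonomialOrder.lex_lt_iff]
    exact Finsupp.toLex_lt_toLex_single (fun _ _ => Finsupp.zero_apply) two_ne_zero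
  rw [MonomialOrder.degree_sub_of_lt hlt, hX]

section Code

variable (K : Type*) [Field K] {n k : ℕ} (C : Submodule (ZMod 2) (Fin n → ZMod 2))

noncomputable def cosetHom : (Fin n →₀ ℕ) →+ (Fin n → ZMod 2) ⧸ C :=
  C.mkQ.toAddMonoidHom.comp (parityHom (Fin n))

noncomputable def codeAlgHom :
    MvPolynomial (Fin n) K →ₐ[K] AddMonoidAlgebra K ((Fin n → ZMod 2) ⧸ C) :=
  AddMonoidAlgebra.mapDomainAlgHom K K (cosetHom C)

theorem codeAlgHom_monomial (d : Fin n →₀ ℕ) (a : K) :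
    codeAlgHom K C (monomial d a) = AddMonoidAlgebra.single (cosetHom C d) a :=
  AddMonoidAlgebra.mapDomain_single

theorem codeAlgHom_Xw (w : Fin n → ZMod 2) :
    codeAlgHom K C (Xw K w) = AddMonoidAlgebra.single (Submodule.Quotient.mk w) 1 := by
  rw [Xw, codeAlgHom_monomial, cosetHom, AddMonoidHom.comp_apply, parityHom_expOf]
  rfl

theorem codeIdeal_le_ker_codeAlgHom : codeIdeal K C ≤ RingHom.ker (codeAlgHom K C) := by
  rw [codeIdeal, Ideal.span_le]
  rintro f (⟨c, c', hcc, rfl⟩ | ⟨i, rfl⟩)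
  · simp [codeAlgHom_Xw, (Submodule.Quotient.eq C).mpr hcc]
  · have hsq : cosetHom C (Finsupp.single i 2) = 0 := by
      have : parityHom (Fin n) (Finsupp.single i 2) = 0 := by
        ext j
        simp only [parityHom_apply, Finsupp.single_apply, Pi.zero_apply]
        split_ifs <;> rfl
      simp [cosetHom, this]
    rw [SetLike.mem_coe, RingHom.mem_ker, map_sub, map_one, X_pow_eq_monomial,
      codeAlgHom_monomial, hsq, AddMonoidAlgebra.one_def, sub_self]

theorem Xw_sub_Xw_mem_codeIdeal_iff {u v : Fin n → ZMod 2} :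
    Xw K u - Xw K v ∈ codeIdeal K C ↔ u - v ∈ C := by
  refine ⟨fun h => ?_, fun h => Ideal.subset_span (Or.inl ⟨u, v, h, rfl⟩)⟩
  have := codeIdeal_le_ker_codeAlgHom K C h
  rw [RingHom.mem_ker, map_sub, codeAlgHom_Xw, codeAlgHom_Xw, sub_eq_zero,
    AddMonoidAlgebra.single_left_inj one_ne_zero] at this
  exact (Submodule.Quotient.eq C).mp this

variable {K C} {hk : k ≤ n} {g : Fin k → Fin n → ZMod 2}

theorem lex_degree_X_sub_Xw_mrow (i : Fin k) :
    MonomialOrder.lex.degree (X (Fin.castLE hk i) - Xw K (mrow g i))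
      = Finsupp.single (Fin.castLE hk i) 1 := by
  classical
  have hlt : MonomialOrder.lex.degree (Xw K (mrow g i)) ≺[MonomialOrder.lex]
      MonomialOrder.lex.degree (X (Fin.castLE hk i) : MvPolynomial (Fin n) K) := by
    rw [MonomialOrder.degree_X, Xw, MonomialOrder.degree_monomial, if_neg one_ne_zero,
      MonomialOrder.lex_lt_iff]
    refine Finsupp.toLex_lt_toLex_single (fun j hj => ?_) one_ne_zero
    have hjk : (j : ℕ) < k := lt_of_le_of_lt (Fin.le_def.mp hj) i.2
    simp [expOf, mrow, hjk]
  rw [MonomialOrder.degree_sub_of_lt hlt, MonomialOrder.degree_X]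

/-- Exponents of the monomials divisible by no leading monomial `X_i` (`i < k`) or `X_j ^ 2`
(`k ≤ j`) of `gbSet`. -/
def stdExps (n k : ℕ) : Set (Fin n →₀ ℕ) :=
  {d | (∀ j : Fin n, (j : ℕ) < k → d j = 0) ∧ ∀ j, d j ≤ 1}

theorem support_subset_stdExps_of_isRemainder {I : Ideal (MvPolynomial (Fin n) K)}
    {f r : MvPolynomial (Fin n) K} (hr : IsRemainder MonomialOrder.lex I (gbSet K hk g) f r) :
    ↑r.support ⊆ stdExps n k := by
  intro c hc
  have hfirst : ∀ j : Fin n, (j : ℕ) < k → c j = 0 := by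
    intro j hj
    have hdeg := lex_degree_X_sub_Xw_mrow (K := K) (hk := hk) (g := g) ⟨j, hj⟩
    have := hr.not_degree_le hc (Or.inl ⟨⟨j, hj⟩, rfl⟩) (by rw [hdeg]; simp)
    rw [hdeg, Finsupp.single_le_iff] at this
    exact Nat.lt_one_iff.mp (not_le.mp this)
  refine ⟨hfirst, fun j => ?_⟩
  by_cases hj : (j : ℕ) < k
  · simp [hfirst j hj]
  · have := hr.not_degree_le hc (Or.inr ⟨j, not_lt.mp hj, rfl⟩)
      (by simp [lex_degree_X_sq_sub_one])
    rw [lex_degree_X_sq_sub_one, Finsupp.single_le_iff] at this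
    omega

theorem IsStandardGenMatrix.eq_zero_of_mem (hg : IsStandardGenMatrix hk C g)
    {x : Fin n → ZMod 2} (hx : x ∈ C) (h0 : ∀ i : Fin k, x (Fin.castLE hk i) = 0) : x = 0 := by
  rw [hg.1, Submodule.mem_span_range_iff_exists_fun] at hx
  obtain ⟨a, rfl⟩ := hx
  have ha : ∀ i, a i = 0 := fun i => by simpa [Finset.sum_apply, hg.2] using h0 i
  simp [ha]

theorem IsStandardGenMatrix.injOn_cosetHom (hg : IsStandardGenMatrix hk C g) :
    Set.InjOn (cosetHom C) (stdExps n k) := by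
  intro d hd d' hd' h
  have hsub : parityHom _ d - parityHom _ d' ∈ C := (Submodule.Quotient.eq C).mp h
  have hpar : parityHom (Fin n) d = parityHom (Fin n) d' :=
    sub_eq_zero.mp <| hg.eq_zero_of_mem hsub fun i => by
      simp [hd.1 (Fin.castLE hk i) i.2, hd'.1 (Fin.castLE hk i) i.2]
  ext j
  have hj := congrFun hpar j
  rw [parityHom_apply, parityHom_apply, ZMod.natCast_eq_natCast_iff'] at hj
  have := hd.2 j
  have := hd'.2 j
  omega

theorem IsStandardGenMatrix.eq_of_codeAlgHom_eq (hg : IsStandardGenMatrix hk C g)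
    {p q : MvPolynomial (Fin n) K} (hp : ↑p.support ⊆ stdExps n k)
    (hq : ↑q.support ⊆ stdExps n k) (h : codeAlgHom K C p = codeAlgHom K C q) : p = q :=
  AddMonoidAlgebra.coeff_injective <|
    Finsupp.mapDomain_injOn _ hg.injOn_cosetHom hp hq (congrArg AddMonoidAlgebra.coeff h)

theorem IsStandardGenMatrix.eq_iff_sub_mem_of_isRemainder (hg : IsStandardGenMatrix hk C g)
    {f f' r r' : MvPolynomial (Fin n) K}
    (hr : IsRemainder MonomialOrder.lex (codeIdeal K C) (gbSet K hk g) f r)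
    (hr' : IsRemainder MonomialOrder.lex (codeIdeal K C) (gbSet K hk g) f' r') :
    r = r' ↔ f - f' ∈ codeIdeal K C := by
  constructor
  · rintro rfl
    simpa using Ideal.sub_mem _ hr.1 hr'.1
  · intro h
    have hmem : r - r' ∈ codeIdeal K C := by
      convert Ideal.add_mem _ (Ideal.sub_mem _ h hr.1) hr'.1 using 1
      ring
    have hker := codeIdeal_le_ker_codeAlgHom K C hmem
    rw [RingHom.mem_ker, map_sub, sub_eq_zero] at hker
    exact hg.eq_of_codeAlgHom_eq (support_subset_stdExps_of_isRemainder hr)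
      (support_subset_stdExps_of_isRemainder hr') hker

end Code

/-- for a binary `[n,k]` code `C` with standard-form reduced Groebner basis,
two words `u, v` satisfy `u − v ∈ C` iff the remainders of `X^u − 1` and `X^v − 1` on
division by the basis coincide. -/
theorem sub_mem_code_iff_remainders_eq (K : Type*) [Field K] {n k : ℕ} (hk : k ≤ n)
    (C : Submodule (ZMod 2) (Fin n → ZMod 2)) (g : Fin k → Fin n → ZMod 2)
    (hg : IsStandardGenMatrix hk C g)
    (u v : Fin n → ZMod 2) (ru rv : MvPolynomial (Fin n) K)
    (hu : IsRemainder MonomialOrder.lex (codeIdeal K C) (gbSet K hk g) (Xw K u - 1) ru)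
    (hv : IsRemainder MonomialOrder.lex (codeIdeal K C) (gbSet K hk g) (Xw K v - 1) rv) :
    u - v ∈ C ↔ ru = rv := by
  rw [hg.eq_iff_sub_mem_of_isRemainder hu hv, sub_sub_sub_cancel_right,
    Xw_sub_Xw_mem_codeIdeal_iff]
end
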